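/- arXiv:2510.16117 — 4 statements merged into one kernel-verified Lean document; each statement's English description precedes it below -/
import Mathlib

section
/- A two-term pure state a|j⟩ + b|j'⟩ on n qubits, with a, b nonzero complex numbers and j ≠ j' binary strings of length n, is a product state (fully separable across all n tensor factors) if and only if the Hamming distance between j and j' equals 1. -/
open scoped TensorProduct PiTensorProduct

/-- The computational basis vector `|j⟩` of `(ℂ²)^⊗n` indexed by a binary string `j`. -/
noncomputable def basisVec {n : ℕ} (j : Fin n → Fin 2) :
    ⨂[ℂ] _ : Fin n, (Fin 2 → ℂ) :=
  PiTensorProduct.tprod ℂ (fun i => fun k => if k = j i then (1 : ℂ) else 0)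

/-- A vector of `(ℂ²)^⊗n` is a product (fully separable) state if it is an elementary
tensor of single-qubit vectors. -/
def IsProductState {n : ℕ} (v : ⨂[ℂ] _ : Fin n, (Fin 2 → ℂ)) : Prop :=
  ∃ u : Fin n → (Fin 2 → ℂ), v = PiTensorProduct.tprod ℂ u

/-!
If `a|j⟩ + b|j'⟩ = ⨂ uᵢ`, the coefficient of `|k⟩` is `∏ uᵢ(kᵢ)`, so the set of basis strings
with nonzero coefficient is a box: it contains every string whose `i`-th letter is taken from
`j` or from `j'`. When `j` and `j'` differ in two places `i₁ ≠ i₂`, swapping only the `i₁`-th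
letter of `j` gives a string in that box other than `j` and `j'`, a contradiction. Conversely, if
they differ only at `i`, the state is `⨂_{k ≠ i} |jₖ⟩ ⊗ (a|jᵢ⟩ + b|j'ᵢ⟩)` by multilinearity.
-/

open PiTensorProduct

section Hamming

variable {ι : Type*} [Fintype ι] {β : ι → Type*} [∀ i, DecidableEq (β i)]

theorem exists_eq_update_of_hammingDist_eq_one [DecidableEq ι] {x y : ∀ i, β i}
    (h : hammingDist x y = 1) : ∃ i, y = Function.update x i (y i) := by
  obtain ⟨i, hi⟩ := Finset.card_eq_one.mp h
  refine ⟨i, funext fun k => ?_⟩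
  rcases eq_or_ne k i with rfl | hk
  · simp
  · rw [Function.update_of_ne hk]
    by_contra hne
    have hk_mem : k ∈ ({i} : Finset ι) := hi ▸ by simp [Ne.symm hne]
    exact hk (Finset.mem_singleton.mp hk_mem)

theorem exists_ne_ne_of_one_lt_hammingDist {x y : ∀ i, β i} (h : 1 < hammingDist x y) :
    ∃ i₁ i₂, i₁ ≠ i₂ ∧ x i₁ ≠ y i₁ ∧ x i₂ ≠ y i₂ := by
  obtain ⟨i₁, hi₁, i₂, hi₂, hne⟩ := Finset.one_lt_card.mp h
  simp only [Finset.mem_filter, Finset.mem_univ, true_and] at hi₁ hi₂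
  exact ⟨i₁, i₂, hne, hi₁, hi₂⟩

end Hamming

section BasisCoeff

variable {R : Type*} [CommSemiring R] {ι : Type*} [Fintype ι] {κ : ι → Type*}

/-- The coefficient of the elementary tensor `⨂ᵢ e_{kᵢ}` in the standard basis. -/
noncomputable def basisCoeff (k : ∀ i, κ i) : (⨂[R] i, (κ i → R)) →ₗ[R] R :=
  lift ((MultilinearMap.mkPiAlgebra R ι R).compLinearMap fun i => LinearMap.proj (k i))

theorem basisCoeff_tprod (k : ∀ i, κ i) (u : ∀ i, κ i → R) :
    basisCoeff k (tprod R u) = ∏ i, u i (k i) := by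
  simp [basisCoeff]

theorem basisCoeff_tprod_update_ne_zero [DecidableEq ι] [NoZeroDivisors R] [Nontrivial R]
    {u : ∀ i, κ i → R} {j j' : ∀ i, κ i} (hj : basisCoeff j (tprod R u) ≠ 0)
    (hj' : basisCoeff j' (tprod R u) ≠ 0) (i : ι) :
    basisCoeff (Function.update j i (j' i)) (tprod R u) ≠ 0 := by
  rw [basisCoeff_tprod, Finset.prod_ne_zero_iff] at hj hj' ⊢
  intro k _
  rcases eq_or_ne k i with rfl | hk
  · simpa using hj' k (Finset.mem_univ k)
  · simpa [Function.update_of_ne hk] using hj k (Finset.mem_univ k)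

end BasisCoeff

theorem basisCoeff_basisVec {n : ℕ} (k j : Fin n → Fin 2) :
    basisCoeff k (basisVec j) = if k = j then 1 else 0 := by
  rw [basisVec, basisCoeff_tprod, Finset.prod_boole]
  simp [funext_iff]

theorem hammingDist_le_one_of_isProductState {n : ℕ} {j j' : Fin n → Fin 2} {a b : ℂ}
    (ha : a ≠ 0) (hb : b ≠ 0) (h : IsProductState (a • basisVec j + b • basisVec j')) :
    hammingDist j j' ≤ 1 := by
  by_contra! hlt
  obtain ⟨i₁, i₂, hne, h₁, h₂⟩ := exists_ne_ne_of_one_lt_hammingDist hlt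
  obtain ⟨u, hu⟩ := h
  have hcoeff (k : Fin n → Fin 2) : basisCoeff k (tprod ℂ u) =
      a * (if k = j then 1 else 0) + b * (if k = j' then 1 else 0) := by
    simp [← hu, basisCoeff_basisVec]
  have hjj' : j ≠ j' := fun h => h₁ (h ▸ rfl)
  have hk := basisCoeff_tprod_update_ne_zero (u := u) (j := j) (j' := j')
    (by simp [hcoeff, hjj', ha]) (by simp [hcoeff, hjj'.symm, hb]) i₁
  have hkj : Function.update j i₁ (j' i₁) ≠ j := fun h => h₁ (by rw [← congrFun h i₁]; simp)
  have hkj' : Function.update j i₁ (j' i₁) ≠ j' := fun h => h₂ (by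
    rw [← congrFun h i₂, Function.update_of_ne hne.symm])
  simp [hcoeff, hkj, hkj'] at hk

theorem isProductState_smul_add_smul_update {n : ℕ} (j : Fin n → Fin 2) (i : Fin n)
    (c : Fin 2) (a b : ℂ) :
    IsProductState (a • basisVec j + b • basisVec (Function.update j i c)) := by
  let e : Fin 2 → Fin 2 → ℂ := fun x k => if k = x then 1 else 0
  refine ⟨Function.update (e ∘ j) i (a • e (j i) + b • e c), ?_⟩
  rw [MultilinearMap.map_update_add, MultilinearMap.map_update_smul,
    MultilinearMap.map_update_smul, ← Function.comp_update, ← Function.comp_update,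
    Function.update_eq_self]
  rfl

/-- A two-term state `a|j⟩ + b|j'⟩` with `a, b ≠ 0` and `j ≠ j'` is a product state
iff the Hamming distance between `j` and `j'` is `1`. -/
theorem two_term_separable_iff_hamming_one {n : ℕ} (j j' : Fin n → Fin 2)
    (a b : ℂ) (ha : a ≠ 0) (hb : b ≠ 0) (hjj : j ≠ j') :
    IsProductState (a • basisVec j + b • basisVec j') ↔ hammingDist j j' = 1 := by
  refine ⟨fun h => ?_, fun h => ?_⟩
  · exact le_antisymm (hammingDist_le_one_of_isProductState ha hb h) (hammingDist_pos.mpr hjj)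
  · obtain ⟨i, hi⟩ := exists_eq_update_of_hammingDist_eq_one h
    rw [hi]
    exact isProductState_smul_add_smul_update j i (j' i) a b
end

section
/- Let ρ be an N × N positive semidefinite matrix with all diagonal entries strictly positive, and let G be a connected graph on the index set {0,…,N−1}. If |ρ_{jk}|² = ρ_{jj}·ρ_{kk} for every edge {j,k} of G, then ρ has rank one. -/
open scoped ComplexOrder

/-!
Write `ρ = Bᴴ B`, so that `ρ` is the Gram matrix of the columns `v j` of `B`, with
`‖v j‖² = ρ_{jj} > 0`. Equality in Cauchy–Schwarz on an edge `{j, k}` makes `v k` a multiple of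
`v j`; along walks of the connected graph every `v k` is a multiple of one fixed `v j₀ ≠ 0`, so the
columns span a line and `rank ρ = rank B = 1`.
-/

open Matrix Module Submodule
open scoped MatrixOrder

variable {𝕜 : Type*} [RCLike 𝕜]

theorem mem_span_singleton_of_norm_inner_eq_norm_mul {E : Type*} [NormedAddCommGroup E]
    [InnerProductSpace 𝕜 E] {x y : E} (hx : x ≠ 0) (h : ‖inner 𝕜 x y‖ = ‖x‖ * ‖y‖) :
    y ∈ 𝕜 ∙ x :=
  Or.resolve_left (((norm_inner_eq_norm_tfae 𝕜 x y).out 0 3).mp h) hx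

theorem SimpleGraph.Reachable.mem_span_singleton {R M V : Type*} [Semiring R] [AddCommMonoid M]
    [Module R M] {G : SimpleGraph V} {v : V → M} (hadj : ∀ j k, G.Adj j k → v k ∈ R ∙ v j)
    {j k : V} (h : G.Reachable j k) : v k ∈ R ∙ v j := by
  obtain ⟨w⟩ := h
  induction w with
  | nil => exact mem_span_singleton_self _
  | cons hju _ ih => exact span_singleton_le_iff_mem _ _ |>.mpr (hadj _ _ hju) ih

theorem SimpleGraph.Connected.span_range_eq_span_singleton {R M V : Type*} [Semiring R]
    [AddCommMonoid M] [Module R M] {G : SimpleGraph V} (hG : G.Connected) {v : V → M}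
    (hadj : ∀ j k, G.Adj j k → v k ∈ R ∙ v j) (j₀ : V) :
    span R (Set.range v) = R ∙ v j₀ :=
  le_antisymm (span_le.mpr <| Set.range_subset_iff.mpr fun k ↦ (hG j₀ k).mem_span_singleton hadj)
    (span_mono <| Set.singleton_subset_iff.mpr ⟨j₀, rfl⟩)

namespace Matrix

variable {m n : Type*} [Fintype m]

theorem conjTranspose_mul_self_eq_gram (B : Matrix m n 𝕜) :
    Bᴴ * B = gram 𝕜 fun j ↦ WithLp.toLp 2 (B.col j) := by
  ext i j
  simp [mul_apply, gram_apply, EuclideanSpace.inner_eq_star_dotProduct, dotProduct, mul_comm]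

theorem PosSemidef.exists_eq_gram [Fintype n] [DecidableEq n] {ρ : Matrix n n 𝕜}
    (hρ : ρ.PosSemidef) :
    ∃ v : n → EuclideanSpace 𝕜 n, ρ = gram 𝕜 v := by
  obtain ⟨B, rfl⟩ := CStarAlgebra.nonneg_iff_eq_star_mul_self.mp hρ.nonneg
  exact ⟨_, conjTranspose_mul_self_eq_gram B⟩

theorem rank_gram_eq_finrank_span [Fintype n] (v : n → EuclideanSpace 𝕜 m) :
    (gram 𝕜 v).rank = finrank 𝕜 (span 𝕜 (Set.range v)) := by
  set B : Matrix m n 𝕜 := of fun i j ↦ v j i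
  have hv : v = fun j ↦ WithLp.toLp 2 (B.col j) := rfl
  rw [hv, ← conjTranspose_mul_self_eq_gram, rank_conjTranspose_mul_self, rank_eq_finrank_span_cols,
    ← (WithLp.linearEquiv 2 𝕜 (m → 𝕜)).symm.finrank_map_eq, ← span_image, ← Set.range_comp]
  rfl

end Matrix

/-- If `ρ` is PSD with strictly positive diagonal and the Cauchy–Schwarz inequality
`|ρ_{jk}|² = ρ_{jj} ρ_{kk}` is saturated on every edge of a connected graph `G` on the
index set, then `ρ` has rank one. -/
theorem psd_saturated_connected_rank_one {N : ℕ} (ρ : Matrix (Fin N) (Fin N) ℂ)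
    (hρ : ρ.PosSemidef) (hdiag : ∀ j, 0 < (ρ j j).re)
    (G : SimpleGraph (Fin N)) (hG : G.Connected)
    (hsat : ∀ j k, G.Adj j k → ‖ρ j k‖ ^ 2 = (ρ j j).re * (ρ k k).re) :
    ρ.rank = 1 := by
  obtain ⟨v, rfl⟩ := hρ.exists_eq_gram
  have hnorm (j) : (gram ℂ v j j).re = ‖v j‖ ^ 2 := inner_self_eq_norm_sq (𝕜 := ℂ) (v j)
  simp only [hnorm] at hdiag hsat
  have hv : ∀ j, v j ≠ 0 := fun j h ↦ by simpa [h] using hdiag j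
  have hadj : ∀ j k, G.Adj j k → v k ∈ ℂ ∙ v j := fun j k hjk ↦
    mem_span_singleton_of_norm_inner_eq_norm_mul (hv j) <|
      (sq_eq_sq₀ (norm_nonneg _) (by positivity)).mp (by rw [← gram_apply, hsat j k hjk, mul_pow])
  obtain ⟨j₀⟩ := hG.nonempty
  rw [rank_gram_eq_finrank_span, hG.span_range_eq_span_singleton hadj j₀,
    finrank_span_singleton (hv j₀)]
end

section
/- Consider the system of equations 4·a_j·conj(a_{j+1}) = Λ_{j+1} for j = 0,…,N−2, in unknowns a₀,…,a_{N−1} ∈ ℂ with all Λ_j nonzero, together with the normalization a₀ > 0 real and |a₀| fixed. Then the unique solution is given, for even j > 0, by a_j = a₀·(conj(Λ₂)·conj(Λ₄)⋯conj(Λ_j))/(Λ₁·Λ₃⋯Λ_{j−1}), and for odd j by a_j = (1/(4a₀))·(conj(Λ₁)·conj(Λ₃)⋯conj(Λ_j))/(Λ₂·Λ₄⋯Λ_{j−1}). -/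
/-!
Conjugating the equation at `j + 1` and multiplying it with the equation at `j` eliminates
`a (j + 1)`: both sides of `a (j + 2) · Λ (j + 1) = a j · conj (Λ (j + 2))` equal
`4 · a j · conj (a (j + 1)) · a (j + 2)`. So the even-indexed unknowns are `a 0` times a
product of ratios `conj Λ (2m) / Λ (2m - 1)`, and each odd-indexed one is recovered from its
even predecessor by `a (j + 1) = conj (Λ (j + 1)) / (4 · conj (a j))`; the reality of `a 0`
turns `conj (a 0)` into `a 0` there.
-/

open Complex Finset

theorem eq_mul_prod_Icc_of_succ_eq_mul {M : Type*} [CommMonoid M] (y r : ℕ → M) (k : ℕ)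
    (hy : ∀ i < k, y (i + 1) = y i * r (i + 1)) :
    y k = y 0 * ∏ m ∈ Icc 1 k, r m := by
  induction k with
  | zero => simp
  | succ k ih =>
    rw [hy k k.lt_succ_self, ih fun i hi => hy i (Nat.lt_succ_of_lt hi),
      prod_Icc_succ_top (Nat.le_add_left 1 k), mul_assoc]

section PathEquations

variable {N : ℕ} {a Λ : ℕ → ℂ}
  (heq : ∀ j : ℕ, j + 1 < N → 4 * a j * (starRingEnd ℂ) (a (j + 1)) = Λ (j + 1))
  (hΛ : ∀ j : ℕ, 1 ≤ j → j < N → Λ j ≠ 0)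
include heq

theorem path_conj_mul_succ {j : ℕ} (hj : j + 1 < N) :
    4 * (starRingEnd ℂ) (a j) * a (j + 1) = (starRingEnd ℂ) (Λ (j + 1)) := by
  have h := congrArg (starRingEnd ℂ) (heq j hj)
  rwa [map_mul, map_mul, map_ofNat, conj_conj] at h

theorem path_add_two_mul {j : ℕ} (hj : j + 2 < N) :
    a (j + 2) * Λ (j + 1) = a j * (starRingEnd ℂ) (Λ (j + 2)) := by
  rw [← heq j (by omega), ← path_conj_mul_succ heq hj]
  ring

include hΛ

theorem path_add_two {j : ℕ} (hj : j + 2 < N) :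
    a (j + 2) = a j * ((starRingEnd ℂ) (Λ (j + 2)) / Λ (j + 1)) := by
  rw [← mul_div_assoc, ← path_add_two_mul heq hj,
    mul_div_cancel_right₀ _ (hΛ (j + 1) (by omega) (by omega))]

theorem path_succ {j : ℕ} (hj : j + 1 < N) :
    a (j + 1) = (starRingEnd ℂ) (Λ (j + 1)) / (4 * (starRingEnd ℂ) (a j)) := by
  have ha : a j ≠ 0 := by
    intro h
    apply hΛ (j + 1) (by omega) hj
    rw [← heq j hj, h, mul_zero, zero_mul]
  rw [← path_conj_mul_succ heq hj,
    mul_div_cancel_left₀ _ (mul_ne_zero (by norm_num) ((map_ne_zero _).mpr ha))]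

theorem path_even {k : ℕ} (hk : 2 * k < N) :
    a (2 * k) = a 0 * (∏ m ∈ Icc 1 k, (starRingEnd ℂ) (Λ (2 * m)))
      / ∏ m ∈ Icc 1 k, Λ (2 * m - 1) := by
  rw [mul_div_assoc, ← prod_div_distrib]
  refine eq_mul_prod_Icc_of_succ_eq_mul (fun i => a (2 * i)) _ k fun i hi => ?_
  simpa [Nat.mul_succ] using path_add_two heq hΛ (j := 2 * i) (by omega)

theorem path_odd (ha0 : (a 0).im = 0) {k : ℕ} (hk : 2 * k + 1 < N) :
    a (2 * k + 1) = (1 / (4 * a 0))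
      * (∏ m ∈ Icc 1 (k + 1), (starRingEnd ℂ) (Λ (2 * m - 1)))
      / ∏ m ∈ Icc 1 k, Λ (2 * m) := by
  have hconj : (starRingEnd ℂ) (a (2 * k)) = a 0 * (∏ m ∈ Icc 1 k, Λ (2 * m))
      / ∏ m ∈ Icc 1 k, (starRingEnd ℂ) (Λ (2 * m - 1)) := by
    rw [path_even heq hΛ (by omega), map_div₀, map_mul, conj_eq_iff_im.mpr ha0, map_prod,
      map_prod]
    simp only [conj_conj]
  rw [path_succ heq hΛ hk, hconj, prod_Icc_succ_top (Nat.le_add_left 1 k),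
    show 2 * (k + 1) - 1 = 2 * k + 1 by omega]
  simp only [div_eq_mul_inv, mul_inv, inv_inv]
  ring

end PathEquations

theorem path_reconstruction_general (N : ℕ) (a : ℕ → ℂ) (Λ : ℕ → ℂ)
    (ha0re : (a 0).im = 0)
    (heq : ∀ j : ℕ, j + 1 < N → 4 * a j * (starRingEnd ℂ) (a (j + 1)) = Λ (j + 1))
    (hΛ : ∀ j : ℕ, 1 ≤ j → j < N → Λ j ≠ 0) :
    ∀ j : ℕ, j < N →
      (Even j → j ≠ 0 →
        a j = a 0 * (∏ m ∈ Finset.Icc 1 (j / 2), (starRingEnd ℂ) (Λ (2 * m)))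
            / (∏ m ∈ Finset.Icc 1 (j / 2), Λ (2 * m - 1))) ∧
      (Odd j →
        a j = (1 / (4 * a 0))
            * (∏ m ∈ Finset.Icc 1 ((j + 1) / 2), (starRingEnd ℂ) (Λ (2 * m - 1)))
            / (∏ m ∈ Finset.Icc 1 ((j - 1) / 2), Λ (2 * m))) := by
  intro j hj
  refine ⟨fun ⟨k, hk⟩ _ => ?_, fun ⟨k, hk⟩ => ?_⟩
  · obtain rfl : j = 2 * k := by omega
    rw [Nat.mul_div_cancel_left k two_pos]
    exact path_even heq hΛ hj
  · subst hk
    rw [show (2 * k + 1 + 1) / 2 = k + 1 by omega, show (2 * k + 1 - 1) / 2 = k by omega]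
    exact path_odd heq hΛ ha0re hj

/-- Analytic reconstruction along a path: if `4 a_j conj(a_{j+1}) = Λ_{j+1}` for
`j = 0,…,N−2` with all `Λ_j ≠ 0` and `a₀` real positive, then for even `j > 0`
`a_j = a₀ (conj Λ₂ ⋯ conj Λ_j)/(Λ₁ ⋯ Λ_{j−1})`, and for odd `j`
`a_j = (1/(4a₀)) (conj Λ₁ ⋯ conj Λ_j)/(Λ₂ ⋯ Λ_{j−1})`. -/
theorem path_reconstruction (N : ℕ) (a : ℕ → ℂ) (Λ : ℕ → ℂ)
    (ha0re : (a 0).im = 0) (ha0pos : 0 < (a 0).re)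
    (heq : ∀ j : ℕ, j + 1 < N → 4 * a j * (starRingEnd ℂ) (a (j + 1)) = Λ (j + 1))
    (hΛ : ∀ j : ℕ, 1 ≤ j → j < N → Λ j ≠ 0) :
    ∀ j : ℕ, j < N →
      (Even j → j ≠ 0 →
        a j = a 0 * (∏ m ∈ Finset.Icc 1 (j / 2), (starRingEnd ℂ) (Λ (2 * m)))
            / (∏ m ∈ Finset.Icc 1 (j / 2), Λ (2 * m - 1))) ∧
      (Odd j →
        a j = (1 / (4 * a 0))
            * (∏ m ∈ Finset.Icc 1 ((j + 1) / 2), (starRingEnd ℂ) (Λ (2 * m - 1)))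
            / (∏ m ∈ Finset.Icc 1 ((j - 1) / 2), Λ (2 * m))) :=
  path_reconstruction_general N a Λ ha0re heq hΛ
end

section
/- The n-dimensional hypercube graph contains 2^{−n} · ∏_{i=1}^{n} (2i)^{C(n,i)} spanning trees, where C(n,i) denotes the binomial coefficient. -/
/-!
Orient the edges of a finite graph `G` arbitrarily and let `C = [B | 1]` be its oriented
incidence matrix with an all-ones column appended, so that `C Cᵀ = L + J`. By Cauchy–Binet,
`det (L + J)` is the sum of the squared maximal minors of `C`. Such a minor vanishes unless it
consists of the all-ones column and the edges of a spanning tree, and then it is `± |V|`;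
hence `det (L + J) = |V|² τ(G)`.

For `Q_n` the Walsh functions `χ_S v = (-1) ^ #{i | S i ∧ v i}` are an eigenbasis of `L + J`,
with eigenvalue `2 |S|` for `S ≠ ∅` and `2ⁿ` for `S = ∅`. Hence
`4ⁿ τ(Q_n) = det (L + J) = 2ⁿ ∏ (2i) ^ C(n,i)`.
-/

/-- The `n`-dimensional hypercube graph on binary strings of length `n`. -/
def hypercube (n : ℕ) : SimpleGraph (Fin n → Bool) where
  Adj j k := hammingDist j k = 1
  symm := ⟨fun j k h => by simpa [hammingDist_comm] using h⟩
  loopless := ⟨fun j h => by simp [hammingDist_self] at h⟩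

open Finset Matrix Equiv

namespace Matrix

variable {m K R : Type*} [Fintype m] [DecidableEq m] [CommRing R]

noncomputable def colMinorSq (A : Matrix m K R) (s : Finset K) : R :=
  if h : Fintype.card m = #s then
    det (A.submatrix id fun i ↦
      (Fintype.equivOfCardEq (h.trans (Fintype.card_coe s).symm) i : K)) ^ 2
  else 0

theorem colMinorSq_of_card_ne (A : Matrix m K R) {s : Finset K} (h : Fintype.card m ≠ #s) :
    colMinorSq A s = 0 :=
  dif_neg h

theorem colMinorSq_eq (A : Matrix m K R) {s : Finset K} (e : m ≃ s) :
    colMinorSq A s = det (A.submatrix id fun i ↦ (e i : K)) ^ 2 := by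
  have h : Fintype.card m = #s := (Fintype.card_congr e).trans (Fintype.card_coe s)
  rw [colMinorSq, dif_pos h]
  set e' := Fintype.equivOfCardEq (h.trans (Fintype.card_coe s).symm)
  have hperm : (A.submatrix id fun i ↦ (e' i : K)) =
      (A.submatrix id fun i ↦ (e i : K)).submatrix id (e'.trans e.symm) := by
    ext i j; simp
  rw [hperm, det_permute', mul_pow, ← Int.cast_pow, ← Units.val_pow_eq_pow_val, Int.units_sq,
    Units.val_one, Int.cast_one, one_mul]

theorem det_mul_transpose_eq_sum_prod_mul_det [Fintype K] (A : Matrix m K R) :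
    det (A * Aᵀ) = ∑ f : m → K, (∏ i, A i (f i)) * det (A.submatrix id f) := by
  calc det (A * Aᵀ)
      = ∑ σ : Perm m, ∑ f : m → K, (Perm.sign σ : R) * ∏ i, (A (σ i) (f i) * A i (f i)) := by
        simp only [det_apply', mul_apply, transpose_apply, prod_univ_sum, Fintype.piFinset_univ,
          Finset.mul_sum]
    _ = ∑ f : m → K, (∏ i, A i (f i)) *
          ∑ σ : Perm m, (Perm.sign σ : R) * ∏ i, A (σ i) (f i) := by
        rw [Finset.sum_comm]
        simp only [Finset.mul_sum, prod_mul_distrib]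
        exact sum_congr rfl fun _ _ ↦ sum_congr rfl fun _ _ ↦ by ring
    _ = _ := by simp only [det_apply', submatrix_apply, id]

theorem det_submatrix_eq_zero_of_not_injective (A : Matrix m K R) {f : m → K}
    (hf : ¬ Function.Injective f) : det (A.submatrix id f) = 0 := by
  obtain ⟨i, j, hij, hne⟩ := Function.not_injective_iff.mp hf
  exact det_zero_of_column_eq hne fun k ↦ by simp [hij]

theorem filter_image_eq_eq_image_perm [Fintype K] [DecidableEq K] {s : Finset K} (e : m ≃ s) :
    ({f : m → K | univ.image f = s} : Finset (m → K)) =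
      univ.image fun (σ : Perm m) i ↦ (e (σ i) : K) := by
  ext f
  simp only [mem_filter, mem_univ, true_and, mem_image]
  constructor
  · intro hf
    have hmem : ∀ i, f i ∈ s := fun i ↦ hf ▸ mem_image_of_mem f (mem_univ i)
    have hinj : Function.Injective f := by
      have : #(univ.image f) = #(univ : Finset m) := by
        rw [hf, card_univ, ← Fintype.card_coe s, Fintype.card_congr e]
      exact fun i j hij ↦ card_image_iff.mp this (mem_univ i) (mem_univ j) hij
    refine ⟨Equiv.ofBijective (fun i ↦ e.symm ⟨f i, hmem i⟩) ?_, funext fun i ↦ ?_⟩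
    · exact Finite.injective_iff_bijective.mp fun i j h ↦ hinj (by simpa using h)
    · exact congrArg Subtype.val (e.apply_symm_apply ⟨f i, hmem i⟩)
  · rintro ⟨σ, rfl⟩
    ext k
    simp only [mem_image, mem_univ, true_and]
    exact ⟨fun ⟨i, hi⟩ ↦ hi ▸ (e (σ i)).2, fun hk ↦ ⟨σ.symm (e.symm ⟨k, hk⟩), by simp⟩⟩

theorem sum_image_eq_colMinorSq [Fintype K] [DecidableEq K] (A : Matrix m K R) (s : Finset K) :
    ∑ f with univ.image f = s, (∏ i, A i (f i)) * det (A.submatrix id f) = colMinorSq A s := by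
  by_cases h : Fintype.card m = #s
  · obtain e : m ≃ s := Fintype.equivOfCardEq (h.trans (Fintype.card_coe s).symm)
    set D := A.submatrix id fun i ↦ (e i : K)
    have hσ (σ : Perm m) : (A.submatrix id fun i ↦ (e (σ i) : K)) = D.submatrix id σ := rfl
    have hinj : Function.Injective fun (σ : Perm m) i ↦ (e (σ i) : K) := fun σ τ h ↦
      Equiv.ext fun i ↦ e.injective (Subtype.ext (congr_fun h i))
    rw [filter_image_eq_eq_image_perm e, sum_image fun σ _ τ _ h ↦ hinj h, colMinorSq_eq A e, sq]
    simp only [hσ, det_permute']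
    conv_rhs => enter [1]; rw [← det_transpose, det_apply']
    rw [Finset.sum_mul]
    exact sum_congr rfl fun σ _ ↦ by simp only [transpose_apply, D, submatrix_apply, id]; ring
  · rw [colMinorSq_of_card_ne A h]
    refine sum_eq_zero fun f hf ↦ ?_
    rw [det_submatrix_eq_zero_of_not_injective A fun hinj ↦ h ?_, mul_zero]
    rw [← (mem_filter.mp hf).2, card_image_of_injective _ hinj, card_univ]

theorem det_mul_transpose_eq_sum_colMinorSq [Fintype K] [DecidableEq K] (A : Matrix m K R) :
    det (A * Aᵀ) = ∑ s : Finset K, colMinorSq A s := by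
  rw [det_mul_transpose_eq_sum_prod_mul_det, ← sum_fiberwise (g := fun f ↦ univ.image f)]
  exact sum_congr rfl fun s _ ↦ sum_image_eq_colMinorSq A s

theorem det_submatrix_eq_zero_of_dotProduct_eq_zero [IsDomain R] (A : Matrix m K R)
    (f : m → K) {x : m → R} (hx : x ≠ 0) (h : ∀ i, x ⬝ᵥ Aᵀ (f i) = 0) :
    det (A.submatrix id f) = 0 :=
  exists_vecMul_eq_zero_iff.mp ⟨x, hx, funext h⟩

theorem det_one_updateCol (j : m) (c : m → R) :
    det ((1 : Matrix m m R).updateCol j c) = c j := by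
  simpa [Matrix.one_apply] using det_updateCol_sum (1 : Matrix m m R) j c

theorem det_eq_prod_of_mulVec_eq_smul [IsDomain R] {A P : Matrix m m R} (hP : det P ≠ 0)
    (d : m → R) (h : ∀ j, A *ᵥ Pᵀ j = d j • Pᵀ j) : det A = ∏ j, d j := by
  have hAP : A * P = P * diagonal d := by
    ext i j
    rw [mul_diagonal, mul_comm]
    exact congr_fun (h j) i
  have := congr_arg det hAP
  rw [det_mul, det_mul, det_diagonal, mul_comm (det P)] at this
  exact mul_right_cancel₀ hP this

end Matrix

theorem Sym2.mk_out {α : Type*} (e : Sym2 α) : s(e.out.1, e.out.2) = e :=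
  e.out_eq

namespace SimpleGraph

variable {V : Type*}

theorem adj_out_of_mem_edgeSet {G : SimpleGraph V} {d : Sym2 V} (hd : d ∈ G.edgeSet) :
    G.Adj d.out.1 d.out.2 := by
  rwa [← mem_edgeSet, d.mk_out]

theorem edgeSet_fromEdgeSet_of_subset {G : SimpleGraph V} {t : Set (Sym2 V)}
    (ht : t ⊆ G.edgeSet) : (fromEdgeSet t).edgeSet = t := by
  rw [edgeSet_fromEdgeSet, sdiff_eq_left]
  exact Set.disjoint_left.mpr fun d hd hdiag ↦ G.not_isDiag_of_mem_edgeSet (ht hd) hdiag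

/-- The graph spanned by the edge columns `some e` of a set `s` of columns of `augIncMatrix`. -/
abbrev colGraph (s : Finset (Option (Sym2 V))) : SimpleGraph V :=
  fromEdgeSet (s.eraseNone : Set (Sym2 V))

theorem mem_edgeSet_colGraph {G : SimpleGraph V} {s : Finset (Option (Sym2 V))} {d : Sym2 V}
    (hds : some d ∈ s) (hd : d ∈ G.edgeSet) : d ∈ (colGraph s).edgeSet := by
  rw [edgeSet_fromEdgeSet]
  exact ⟨mem_eraseNone.mpr hds, G.not_isDiag_of_mem_edgeSet hd⟩

theorem isTree_colGraph_iff [Fintype V] {G : SimpleGraph V} {s : Finset (Option (Sym2 V))}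
    (hnone : none ∈ s) (hE : (s.eraseNone : Set (Sym2 V)) ⊆ G.edgeSet) :
    (colGraph s).IsTree ↔ (colGraph s).Connected ∧ #s = Fintype.card V := by
  have hcard : #s.eraseNone + 1 = #s := by
    rw [card_eraseNone_of_mem hnone, Nat.sub_add_cancel (card_pos.mpr ⟨none, hnone⟩)]
  rw [isTree_iff_connected_and_card, edgeSet_fromEdgeSet_of_subset hE, Nat.card_coe_set_eq,
    Set.ncard_coe_finset, hcard, Nat.card_eq_fintype_card]

open Classical in
theorem card_filter_isTree_eq_ncard [Fintype V] [DecidableEq V] (G : SimpleGraph V) :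
    #{s : Finset (Option (Sym2 V)) |
        none ∈ s ∧ (s.eraseNone : Set (Sym2 V)) ⊆ G.edgeSet ∧ (colGraph s).IsTree} =
      {H : SimpleGraph V | H ≤ G ∧ H.IsTree}.ncard := by
  rw [← Set.ncard_coe_finset]
  refine Set.ncard_congr (fun s _ ↦ colGraph s) ?_ ?_ ?_
  · rintro s hs
    simp only [coe_filter, mem_univ, true_and, Set.mem_ofPred_eq] at hs ⊢
    exact ⟨fun v w h ↦ hs.2.1 ((fromEdgeSet_adj _).mp h).1, hs.2.2⟩
  · rintro s₁ s₂ hs₁ hs₂ h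
    simp only [coe_filter, mem_univ, true_and, Set.mem_ofPred_eq] at hs₁ hs₂
    have h' := congr_arg edgeSet h
    rw [edgeSet_fromEdgeSet_of_subset hs₁.2.1, edgeSet_fromEdgeSet_of_subset hs₂.2.1,
      coe_inj] at h'
    rw [← insert_eq_of_mem hs₁.1, ← insert_eq_of_mem hs₂.1, ← insertNone_eraseNone,
      ← insertNone_eraseNone, h']
  · rintro H ⟨hle, hH⟩
    refine ⟨insertNone (Set.toFinite H.edgeSet).toFinset, ?_, ?_⟩
    · simp only [coe_filter, mem_univ, true_and, Set.mem_ofPred_eq, none_mem_insertNone, colGraph,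
        eraseNone_insertNone, Set.Finite.coe_toFinset, fromEdgeSet_edgeSet]
      exact ⟨edgeSet_mono hle, hH⟩
    · simp only [colGraph, eraseNone_insertNone, Set.Finite.coe_toFinset, fromEdgeSet_edgeSet]

variable [DecidableEq V]

/-- The orientation chosen by `Sym2.out` is arbitrary: only squares of minors are used. -/
noncomputable def orientedIncVec (e : Sym2 V) : V → ℤ :=
  Pi.single e.out.1 1 - Pi.single e.out.2 1

theorem orientedIncVec_mul_orientedIncVec {e : Sym2 V} (he : ¬ e.IsDiag) (v w : V) :
    orientedIncVec e v * orientedIncVec e w =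
      if v = w then (if v ∈ e then 1 else 0) else if e = s(v, w) then -1 else 0 := by
  have hne : e.out.1 ≠ e.out.2 := fun h ↦ he (e.mk_out ▸ Sym2.mk_isDiag_iff.mpr h)
  conv_rhs => rw [← e.mk_out]
  simp only [orientedIncVec, Pi.sub_apply, Pi.single_apply, Sym2.mem_iff, Sym2.eq_iff]
  split_ifs <;> grind

variable (G : SimpleGraph V) [DecidableRel G.Adj]

noncomputable def augIncMatrix (y : V → ℤ) : Matrix V (Option (Sym2 V)) ℤ :=
  of fun v k ↦ k.elim (y v) fun e ↦ if e ∈ G.edgeSet then orientedIncVec e v else 0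

noncomputable abbrev augIncMinor (y : V → ℤ) {s : Finset (Option (Sym2 V))} (e : V ≃ s) :
    Matrix V V ℤ :=
  (augIncMatrix G y).submatrix id fun v ↦ (e v : Option (Sym2 V))

variable {G}

theorem augIncMatrix_none (y : V → ℤ) (v : V) : augIncMatrix G y v none = y v := rfl

theorem augIncMatrix_some_of_mem (y : V → ℤ) {e : Sym2 V} (he : e ∈ G.edgeSet) :
    (augIncMatrix G y)ᵀ (some e) = orientedIncVec e := by
  ext v; simp [augIncMatrix, he]

theorem augIncMatrix_some_of_notMem (y : V → ℤ) {e : Sym2 V} (he : e ∉ G.edgeSet) :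
    (augIncMatrix G y)ᵀ (some e) = 0 := by
  ext v; simp [augIncMatrix, he]

open Classical in
/-- Row `some d` is the indicator of the side of `d.out.1` once the edge `d` is cut; for a
forest `T` these rows are a left inverse of its incidence columns. -/
noncomputable def cutRow (T : SimpleGraph V) : Option (Sym2 V) → V → ℤ
  | none => 1
  | some d => fun v ↦ if (T.deleteEdges {d}).Reachable d.out.1 v then 1 else 0

variable [Fintype V]

theorem dotProduct_orientedIncVec (x : V → ℤ) (e : Sym2 V) :
    x ⬝ᵥ orientedIncVec e = x e.out.1 - x e.out.2 := by
  simp [orientedIncVec, dotProduct_sub]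

theorem augIncMatrix_mul_transpose :
    augIncMatrix G 1 * (augIncMatrix G 1)ᵀ = G.lapMatrix ℤ + of fun _ _ ↦ 1 := by
  ext v w
  have hterm (e : Sym2 V) : augIncMatrix G 1 v (some e) * augIncMatrix G 1 w (some e) =
      if e ∈ G.edgeSet then
        (if v = w then (if v ∈ e then 1 else 0) else if e = s(v, w) then -1 else 0) else 0 := by
    by_cases he : e ∈ G.edgeSet
    · simp [augIncMatrix, he, orientedIncVec_mul_orientedIncVec (G.not_isDiag_of_mem_edgeSet he)]
    · simp [augIncMatrix, he]
  rw [mul_apply, Fintype.sum_option]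
  simp only [transpose_apply, hterm, augIncMatrix_none, Pi.one_apply, mul_one, lapMatrix,
    degMatrix, Matrix.add_apply, Matrix.sub_apply, diagonal_apply, adjMatrix_apply, of_apply]
  by_cases hvw : v = w
  · subst hvw
    have hinc : (∑ x : Sym2 V, if x ∈ G.edgeSet then (if v ∈ x then 1 else 0) else 0 : ℤ) =
        #(G.incidenceFinset v) := by
      rw [← sum_filter, incidenceFinset_eq_filter, sum_boole, filter_filter]
      congr 2
      ext x; simp
    simp only [if_true, hinc, card_incidenceFinset_eq_degree, G.irrefl, if_false]
    ring
  · simp only [hvw, if_false]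
    rw [sum_eq_single s(v, w) (fun x _ hx ↦ by simp [hx]) (by simp)]
    simp only [if_true, mem_edgeSet]
    split_ifs <;> ring

theorem dotProduct_augIncMatrix_some (y x : V → ℤ) (d : Sym2 V) :
    x ⬝ᵥ (augIncMatrix G y)ᵀ (some d) = if d ∈ G.edgeSet then x d.out.1 - x d.out.2 else 0 := by
  by_cases hd : d ∈ G.edgeSet
  · rw [augIncMatrix_some_of_mem y hd, dotProduct_orientedIncVec, if_pos hd]
  · rw [augIncMatrix_some_of_notMem y hd, dotProduct_zero, if_neg hd]

variable {s : Finset (Option (Sym2 V))}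

theorem det_augIncMinor_of_none_notMem [Nonempty V] (y : V → ℤ) (e : V ≃ s) (hs : none ∉ s) :
    det (augIncMinor G y e) = 0 := by
  refine det_submatrix_eq_zero_of_dotProduct_eq_zero _ _ (x := 1) one_ne_zero fun u ↦ ?_
  obtain ⟨_ | d, hd⟩ := e u
  · exact absurd hd hs
  · rw [dotProduct_augIncMatrix_some]
    split_ifs <;> simp

theorem det_augIncMinor_of_notMem_edgeSet (y : V → ℤ) (e : V ≃ s) {d : Sym2 V}
    (hds : some d ∈ s) (hd : d ∉ G.edgeSet) : det (augIncMinor G y e) = 0 :=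
  det_eq_zero_of_column_eq_zero (e.symm ⟨some d, hds⟩) fun v ↦ by
    simpa using congr_fun (augIncMatrix_some_of_notMem y hd) v

theorem det_augIncMinor_of_not_preconnected (e : V ≃ s) (hs : ¬ (colGraph s).Preconnected) :
    det (augIncMinor G 1 e) = 0 := by
  classical
  set T := colGraph s
  obtain ⟨u, w, huw⟩ : ∃ u w, ¬ T.Reachable u w := by simpa [Preconnected] using hs
  set c : ℤ := ((#(univ.filter fun v ↦ T.Reachable u v) : ℕ) : ℤ)
  -- the centred indicator of the component of `u` is orthogonal to every column
  set x : V → ℤ := fun v ↦ Fintype.card V * (if T.Reachable u v then 1 else 0) - c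
  have hc : c ≠ 0 := by
    simpa [c, Finset.card_eq_zero, filter_eq_empty_iff] using ⟨u, Reachable.refl u⟩
  refine det_submatrix_eq_zero_of_dotProduct_eq_zero _ _ (x := x)
    (fun hx ↦ hc (by simpa [x, huw] using congr_fun hx w)) fun i ↦ ?_
  obtain ⟨_ | d, hds⟩ := e i
  · rw [show (augIncMatrix G 1)ᵀ none = 1 from rfl, dotProduct_one]
    simp only [x, c, sum_sub_distrib, ← mul_sum, sum_const, card_univ, nsmul_eq_mul]
    rw [sum_boole]
    ring
  · rw [dotProduct_augIncMatrix_some]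
    split_ifs with hd
    · have hadj := adj_out_of_mem_edgeSet (mem_edgeSet_colGraph hds hd)
      have hiff : T.Reachable u d.out.1 ↔ T.Reachable u d.out.2 :=
        ⟨fun h ↦ h.trans hadj.reachable, fun h ↦ h.trans hadj.symm.reachable⟩
      simp [x, hiff]
    · rfl

theorem cutRow_dotProduct_orientedIncVec {T : SimpleGraph V} (hT : T.IsAcyclic) {d d' : Sym2 V}
    (hd : d ∈ T.edgeSet) (hd' : d' ∈ T.edgeSet) :
    cutRow T (some d) ⬝ᵥ orientedIncVec d' = if d = d' then 1 else 0 := by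
  rw [dotProduct_orientedIncVec]
  split_ifs with hdd
  · subst hdd
    have hbridge := isAcyclic_iff_forall_isBridge.mp hT hd
    rw [← d.mk_out, isBridge_iff, d.mk_out] at hbridge
    simp [cutRow, hbridge]
  · have hadj : (T.deleteEdges {d}).Adj d'.out.1 d'.out.2 := by
      rw [deleteEdges_adj, d'.mk_out]
      exact ⟨adj_out_of_mem_edgeSet hd', Ne.symm hdd⟩
    have hiff : (T.deleteEdges {d}).Reachable d.out.1 d'.out.1 ↔
        (T.deleteEdges {d}).Reachable d.out.1 d'.out.2 :=
      ⟨fun h ↦ h.trans hadj.reachable, fun h ↦ h.trans hadj.symm.reachable⟩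
    by_cases h : (T.deleteEdges {d}).Reachable d.out.1 d'.out.1
    · simp [cutRow, h, hiff.mp h]
    · simp [cutRow, h, mt hiff.mpr h]

theorem cutRow_mul_augIncMinor {T : SimpleGraph V} (hT : T.IsAcyclic)
    (hsT : ∀ d, some d ∈ s → d ∈ T.edgeSet ∧ d ∈ G.edgeSet) (hnone : none ∈ s) (e : V ≃ s)
    (y : V → ℤ) :
    (of fun u v ↦ cutRow T (e u) v) * augIncMinor G y e =
      (1 : Matrix V V ℤ).updateCol (e.symm ⟨none, hnone⟩) fun u ↦ cutRow T (e u) ⬝ᵥ y := by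
  ext u u'
  change cutRow T (e u) ⬝ᵥ (augIncMatrix G y)ᵀ (e u') = _
  rw [updateCol_apply]
  split_ifs with hu'
  · subst hu'
    simp only [Equiv.apply_symm_apply]
    rfl
  · obtain ⟨d', hd'⟩ : ∃ d', (e u' : Option (Sym2 V)) = some d' :=
      Option.ne_none_iff_exists'.mp fun h ↦ hu' (e.eq_symm_apply.mpr (Subtype.ext h))
    have hd's := hsT d' (hd' ▸ (e u').2)
    rw [hd', augIncMatrix_some_of_mem y hd's.2, one_apply]
    rcases hk : (e u : Option (Sym2 V)) with _ | d
    · have hne : u ≠ u' := fun h ↦ by simp [h, hd'] at hk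
      simp [cutRow, dotProduct_orientedIncVec, hne]
    · rw [cutRow_dotProduct_orientedIncVec hT (hsT d (hk ▸ (e u).2)).1 hd's.1]
      congr 1
      rw [← e.injective.eq_iff, ← Subtype.coe_inj, hk, hd', Option.some_inj]

theorem det_augIncMinor_sq_of_isAcyclic [Nonempty V] {T : SimpleGraph V} (hT : T.IsAcyclic)
    (hsT : ∀ d, some d ∈ s → d ∈ T.edgeSet ∧ d ∈ G.edgeSet) (hnone : none ∈ s) (e : V ≃ s) :
    det (augIncMinor G 1 e) ^ 2 = Fintype.card V ^ 2 := by
  set Q : Matrix V V ℤ := of fun u v ↦ cutRow T (e u) v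
  have hdet (y : V → ℤ) : det Q * det (augIncMinor G y e) = ∑ v, y v := by
    rw [← det_mul, cutRow_mul_augIncMinor hT hsT hnone e, det_one_updateCol,
      Equiv.apply_symm_apply]
    exact one_dotProduct y
  -- `y = 1` gives `det Q * det M = |V|`, while a point mass `y` shows that `det Q` is a unit
  obtain ⟨r⟩ := ‹Nonempty V›
  have hQ : IsUnit (det Q) := IsUnit.of_mul_eq_one _ (by simpa using hdet (Pi.single r 1))
  have h1 := hdet 1
  simp only [Pi.one_apply, sum_const, card_univ, nsmul_eq_mul, mul_one] at h1
  calc _ = (det Q * det Q) * det (augIncMinor G 1 e) ^ 2 := by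
        rw [Int.isUnit_mul_self hQ, one_mul]
    _ = Fintype.card V ^ 2 := by
        rw [← h1]
        ring

open Classical in
theorem colMinorSq_augIncMatrix [Nonempty V] (s : Finset (Option (Sym2 V))) :
    colMinorSq (augIncMatrix G 1) s =
      if none ∈ s ∧ (s.eraseNone : Set (Sym2 V)) ⊆ G.edgeSet ∧ (colGraph s).IsTree
      then (Fintype.card V : ℤ) ^ 2 else 0 := by
  by_cases hcard : Fintype.card V = #s
  swap
  · rw [colMinorSq_of_card_ne _ hcard, if_neg]
    rintro ⟨hnone, hE, hT⟩
    exact hcard ((isTree_colGraph_iff hnone hE).mp hT).2.symm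
  obtain e : V ≃ s := Fintype.equivOfCardEq (hcard.trans (Fintype.card_coe s).symm)
  rw [colMinorSq_eq _ e]
  by_cases hnone : none ∈ s
  swap
  · rw [det_augIncMinor_of_none_notMem 1 e hnone, if_neg fun h ↦ hnone h.1]
    simp
  by_cases hE : (s.eraseNone : Set (Sym2 V)) ⊆ G.edgeSet
  swap
  · obtain ⟨d, hd, hdE⟩ := Set.not_subset.mp hE
    rw [det_augIncMinor_of_notMem_edgeSet 1 e (mem_eraseNone.mp hd) hdE,
      if_neg fun h ↦ hE h.2.1]
    simp
  rw [isTree_colGraph_iff hnone hE]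
  by_cases hconn : (colGraph s).Connected
  · rw [if_pos ⟨hnone, hE, hconn, hcard.symm⟩]
    have hT := (isTree_colGraph_iff hnone hE).mpr ⟨hconn, hcard.symm⟩
    exact det_augIncMinor_sq_of_isAcyclic hT.isAcyclic
      (fun d hd ↦ ⟨mem_edgeSet_colGraph hd (hE (mem_eraseNone.mpr hd)),
        hE (mem_eraseNone.mpr hd)⟩) hnone e
  · rw [if_neg fun h ↦ hconn h.2.2.1, det_augIncMinor_of_not_preconnected e
      fun hpre ↦ hconn ((connected_iff _).mpr ⟨hpre, inferInstance⟩)]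
    simp

theorem det_lapMatrix_add_one [Nonempty V] :
    det (G.lapMatrix ℤ + of fun _ _ ↦ 1) =
      (Fintype.card V : ℤ) ^ 2 * {H : SimpleGraph V | H ≤ G ∧ H.IsTree}.ncard := by
  classical
  rw [← augIncMatrix_mul_transpose, det_mul_transpose_eq_sum_colMinorSq]
  simp only [colMinorSq_augIncMatrix, sum_ite, sum_const_zero, add_zero, sum_const, nsmul_eq_mul]
  rw [card_filter_isTree_eq_ncard, mul_comm]

end SimpleGraph

namespace Hypercube

variable {n : ℕ}

instance : DecidableRel (hypercube n).Adj :=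
  fun v w ↦ inferInstanceAs (Decidable (hammingDist v w = 1))

def flipAt (v : Fin n → Bool) (i : Fin n) : Fin n → Bool := Function.update v i (!v i)

theorem flipAt_injective (v : Fin n → Bool) : Function.Injective (flipAt v) := by
  intro i j h
  by_contra hij
  have := congr_fun h i
  simp [flipAt, Function.update_of_ne hij] at this

theorem hammingDist_eq_one_iff {v w : Fin n → Bool} :
    hammingDist v w = 1 ↔ ∃ i, w = flipAt v i := by
  rw [hammingDist, card_eq_one]
  constructor
  · rintro ⟨i, hi⟩
    refine ⟨i, funext fun j ↦ ?_⟩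
    have hj : v j ≠ w j ↔ j = i := by simpa using congrArg (j ∈ ·) hi
    by_cases hji : j = i
    · subst hji
      rw [flipAt, Function.update_self]
      revert hj
      cases v j <;> cases w j <;> simp
    · rw [flipAt, Function.update_of_ne hji]
      exact (not_not.mp (mt hj.mp hji)).symm
  · rintro ⟨i, rfl⟩
    refine ⟨i, ?_⟩
    ext j
    by_cases hji : j = i <;> simp [flipAt, Function.update_apply, hji]

theorem neighborFinset_hypercube (v : Fin n → Bool) :
    (hypercube n).neighborFinset v = univ.map ⟨flipAt v, flipAt_injective v⟩ := by
  ext w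
  simp only [SimpleGraph.mem_neighborFinset, mem_map, mem_univ, true_and,
    Function.Embedding.coeFn_mk]
  exact hammingDist_eq_one_iff.trans (exists_congr fun i ↦ eq_comm)

theorem degree_hypercube (v : Fin n → Bool) : (hypercube n).degree v = n := by
  rw [← SimpleGraph.card_neighborFinset_eq_degree, neighborFinset_hypercube, card_map, card_univ,
    Fintype.card_fin]

def weight (S : Fin n → Bool) : ℕ := #{i | S i}

def walsh (S v : Fin n → Bool) : ℤ := ∏ i, bif S i && v i then -1 else 1

theorem walsh_flipAt (S v : Fin n → Bool) (i : Fin n) :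
    walsh S (flipAt v i) = (bif S i then -1 else 1) * walsh S v := by
  simp only [walsh, flipAt]
  rw [← prod_mul_prod_compl {i}, ← prod_mul_prod_compl {i} (fun j ↦ bif S j && v j then _ else _),
    prod_singleton, prod_singleton, ← mul_assoc]
  simp only [Function.update_self]
  congr 1
  · cases S i <;> cases v i <;> simp
  · exact prod_congr rfl fun j hj ↦ by rw [Function.update_of_ne (by simpa using hj)]

theorem sum_walsh_mul_walsh (S T : Fin n → Bool) :
    ∑ v, walsh S v * walsh T v = if S = T then 2 ^ n else 0 := by
  simp only [walsh, ← prod_mul_distrib]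
  rw [← Fintype.prod_sum fun i b ↦ (bif S i && b then -1 else 1) * (bif T i && b then -1 else 1)]
  have hfactor (i : Fin n) : (∑ b : Bool, (bif S i && b then -1 else 1) *
      (bif T i && b then -1 else 1) : ℤ) = if S i = T i then 2 else 0 := by
    cases S i <;> cases T i <;> simp
  simp only [hfactor, Fintype.prod_ite_zero, prod_const, card_univ, Fintype.card_fin, funext_iff]

theorem walsh_const_false (v : Fin n → Bool) : walsh (fun _ ↦ false) v = 1 := by
  simp [walsh]

theorem sum_walsh (S : Fin n → Bool) :
    ∑ v, walsh S v = if S = (fun _ ↦ false) then 2 ^ n else 0 := by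
  simpa [walsh_const_false] using sum_walsh_mul_walsh S (fun _ ↦ false)

theorem sum_cond_neg_one_one (S : Fin n → Bool) :
    ∑ i, (bif S i then -1 else 1 : ℤ) = n - 2 * weight S := by
  have h (i : Fin n) : (bif S i then -1 else 1 : ℤ) = 1 - 2 * if S i then 1 else 0 := by
    cases S i <;> simp
  simp only [h, sum_sub_distrib, ← mul_sum, sum_boole, sum_const, card_univ, Fintype.card_fin,
    nsmul_eq_mul, mul_one, weight]

theorem lapMatrix_mulVec_walsh (S : Fin n → Bool) :
    (hypercube n).lapMatrix ℤ *ᵥ walsh S = (2 * weight S : ℤ) • walsh S := by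
  ext v
  rw [SimpleGraph.lapMatrix_mulVec_apply, degree_hypercube, neighborFinset_hypercube, sum_map]
  simp only [Function.Embedding.coeFn_mk, walsh_flipAt, ← sum_mul, sum_cond_neg_one_one,
    Pi.smul_apply, smul_eq_mul]
  ring

theorem weight_eq_zero_iff {S : Fin n → Bool} : weight S = 0 ↔ S = fun _ ↦ false := by
  simp [weight, Finset.card_eq_zero, filter_eq_empty_iff, funext_iff]

theorem lapMatrix_add_one_mulVec_walsh (S : Fin n → Bool) :
    ((hypercube n).lapMatrix ℤ + of fun _ _ ↦ 1) *ᵥ walsh S =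
      (2 * weight S + if weight S = 0 then 2 ^ n else 0 : ℤ) • walsh S := by
  ext v
  have hJ : ((of fun _ _ ↦ 1 : Matrix _ _ ℤ) *ᵥ walsh S) v = ∑ w, walsh S w := by
    simp [mulVec, dotProduct]
  rw [add_mulVec, Pi.add_apply, lapMatrix_mulVec_walsh, hJ, sum_walsh, Pi.smul_apply,
    Pi.smul_apply, smul_eq_mul, smul_eq_mul, add_mul]
  congr 1
  by_cases hS : S = fun _ ↦ false
  · subst hS
    simp [weight_eq_zero_iff, walsh_const_false]
  · simp [hS, mt weight_eq_zero_iff.mp hS]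

theorem det_walshMatrix_ne_zero : det (of fun v S : Fin n → Bool ↦ walsh S v) ≠ 0 := by
  have h : (of fun v S : Fin n → Bool ↦ walsh S v)ᵀ * (of fun v S ↦ walsh S v) =
      (2 ^ n : ℤ) • (1 : Matrix (Fin n → Bool) (Fin n → Bool) ℤ) := by
    ext S T
    simp [mul_apply, sum_walsh_mul_walsh, one_apply]
  have hsq := congr_arg det h
  rw [det_mul, det_transpose, det_smul, det_one, mul_one] at hsq
  intro h0
  rw [h0, mul_zero] at hsq
  exact absurd hsq.symm (by positivity)

theorem card_filter_weight_eq (k : ℕ) : #{S : Fin n → Bool | weight S = k} = n.choose k := by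
  calc #{S : Fin n → Bool | weight S = k} = #(powersetCard k (univ : Finset (Fin n))) := by
        refine card_nbij' (fun S ↦ univ.filter fun i ↦ S i) (fun t i ↦ decide (i ∈ t))
          ?_ ?_ ?_ ?_
        · intro S hS
          simpa [mem_powersetCard, weight] using mem_filter.mp (mem_coe.mp hS)
        · intro t ht
          rw [mem_coe, mem_filter]
          simpa [weight] using (mem_powersetCard.mp (mem_coe.mp ht)).2
        · intro S _
          simp
        · intro t _
          ext i
          simp
    _ = n.choose k := by simp

theorem prod_weight {M : Type*} [CommMonoid M] (f : ℕ → M) :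
    ∏ S : Fin n → Bool, f (weight S) = ∏ k ∈ range (n + 1), f k ^ n.choose k := by
  rw [← prod_fiberwise_of_maps_to (t := range (n + 1)) (g := weight) fun S _ ↦ ?_]
  · refine prod_congr rfl fun k _ ↦ ?_
    rw [prod_congr rfl fun S hS ↦ by rw [(mem_filter.mp hS).2], prod_const, card_filter_weight_eq]
  · exact mem_range.mpr (Nat.lt_succ_of_le ((card_filter_le _ _).trans (by simp)))

theorem det_lapMatrix_add_one_hypercube :
    det ((hypercube n).lapMatrix ℤ + of fun _ _ ↦ 1) =
      2 ^ n * ∏ k ∈ Icc 1 n, (2 * k : ℤ) ^ n.choose k := by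
  have hrange : range (n + 1) = insert 0 (Icc 1 n) := by
    ext k
    simp only [mem_range, mem_insert, mem_Icc]
    omega
  rw [det_eq_prod_of_mulVec_eq_smul det_walshMatrix_ne_zero _ lapMatrix_add_one_mulVec_walsh,
    prod_weight fun k ↦ (2 * k + if k = 0 then 2 ^ n else 0 : ℤ), hrange, prod_insert (by simp)]
  simp only [CharP.cast_eq_zero, mul_zero, if_true, zero_add, Nat.choose_zero_right, pow_one]
  congr 1
  exact prod_congr rfl fun k hk ↦ by
    rw [if_neg (Nat.one_le_iff_ne_zero.mp (mem_Icc.mp hk).1), add_zero]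

end Hypercube

/-- The number of spanning trees of the hypercube graph `Q_n` is
`2^{−n} ∏_{i=1}^{n} (2i)^{C(n,i)}` (stated multiplied through by `2ⁿ`). -/
theorem hypercube_spanning_tree_count (n : ℕ) :
    {H : SimpleGraph (Fin n → Bool) | H ≤ hypercube n ∧ H.IsTree}.ncard * 2 ^ n =
      ∏ i ∈ Finset.Icc 1 n, (2 * i) ^ ((n).choose i) := by
  have h := (hypercube n).det_lapMatrix_add_one
  rw [Hypercube.det_lapMatrix_add_one_hypercube, Fintype.card_fun, Fintype.card_bool,
    Fintype.card_fin] at h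
  apply Nat.eq_of_mul_eq_mul_right (pow_pos two_pos n)
  zify
  push_cast at h ⊢
  linear_combination -h
end
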